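/- Let p = [b_1^{a_1} ⋯ b_r^{a_r}] (b_1 ≥ ⋯ ≥ b_r) be an orthogonal partition of 2n in which every b_i is odd. Then Σ_i a_i is even, 2n* = Σ_i a_i, and with P := [p_1 p_1 (2n*−1) 1] (the union of two copies of p_1 and extra parts 2n*−1 and 1) one has P^{SO_{2n}} = (p^t)_{SO_{2n}}. -/

import Mathlib

namespace JiangWF

/-- `sCount p i` : the number of parts of `p` that are `≥ i`. -/
def sCount (p : Multiset ℕ) (i : ℕ) : ℕ := (p.filter (fun a => i ≤ a)).card

/-- `rCount p i` : the number of parts of `p` equal to `i`. -/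
def rCount (p : Multiset ℕ) (i : ℕ) : ℕ := p.count i

/-- The largest part of `p` (`0` for the empty partition). -/
def maxPart (p : Multiset ℕ) : ℕ := p.sup

/-- The smallest part of `p` (`0` for the empty partition). -/
noncomputable def minPart (p : Multiset ℕ) : ℕ := sInf {a : ℕ | a ∈ p}

/-- The transpose partition: its `i`-th part is `sCount p i`, for `1 ≤ i ≤ maxPart p`. -/
def transpose (p : Multiset ℕ) : Multiset ℕ :=
  (Multiset.range (maxPart p)).map fun i => sCount p (i + 1)

/-- The sum of the `m` largest parts of `p`. -/
def topSum (p : Multiset ℕ) (m : ℕ) : ℕ :=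
  ∑ i ∈ Finset.Icc 1 p.sum, min m (sCount p i)

/-- Dominance order: `domLE p q` means `p ≤ q`. -/
def domLE (p q : Multiset ℕ) : Prop := ∀ m, topSum p m ≤ topSum q m

/-- `p` is a partition of `N`: all parts positive, summing to `N`. -/
def IsPartitionOf (p : Multiset ℕ) (N : ℕ) : Prop := (∀ a ∈ p, 0 < a) ∧ p.sum = N

/-- Symplectic partition: every odd part occurs with even multiplicity. -/
def IsSymplectic (p : Multiset ℕ) : Prop := ∀ a, a % 2 = 1 → Even (p.count a)

/-- Orthogonal partition: every even part occurs with even multiplicity. -/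
def IsOrthogonal (p : Multiset ℕ) : Prop := ∀ a, a % 2 = 0 → Even (p.count a)

/-- `p^-`: decrease the smallest part by one (deleting it if it becomes `0`). -/
noncomputable def pMinus (p : Multiset ℕ) : Multiset ℕ :=
  if minPart p ≤ 1 then p.erase (minPart p)
  else (minPart p - 1) ::ₘ p.erase (minPart p)

/-- `p^+`: increase the largest part by one. -/
def pPlus (p : Multiset ℕ) : Multiset ℕ := (maxPart p + 1) ::ₘ p.erase (maxPart p)

/-- `p^{+-}`: increase the largest part by one and decrease the smallest by one. -/
noncomputable def pPM (p : Multiset ℕ) : Multiset ℕ := pMinus (pPlus p)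

/-- `p₁ = [⌊b_1/2⌋^{a_1} ⋯ ⌊b_r/2⌋^{a_r}]^t` (discarding zero entries before transposing). -/
def pOne (p : Multiset ℕ) : Multiset ℕ :=
  transpose ((p.map fun b => b / 2).filter fun x => 0 < x)

/-- `Σ_{i : b_i odd} a_i`: the number of odd parts of `p`. -/
def oddMult (p : Multiset ℕ) : ℕ := (p.filter fun a => a % 2 = 1).card

/-- `n* = ⌊(Σ_{i : b_i odd} a_i)/2⌋`. -/
def nStar (p : Multiset ℕ) : ℕ := oddMult p / 2

/-- Append an extra part `m` to `q`, omitted if `m = 0`. -/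
def addPart (m : ℕ) (q : Multiset ℕ) : Multiset ℕ := if m = 0 then q else m ::ₘ q

/-- `c` is the `Sp`-collapse of `p`: the maximal symplectic partition `≤ p` in dominance. -/
def IsSpCollapse (p c : Multiset ℕ) : Prop :=
  IsPartitionOf c p.sum ∧ IsSymplectic c ∧ domLE c p ∧
    ∀ c', IsPartitionOf c' p.sum → IsSymplectic c' → domLE c' p → domLE c' c

/-- `c` is the `SO`-collapse of `p`: the maximal orthogonal partition `≤ p` in dominance. -/
def IsSOCollapse (p c : Multiset ℕ) : Prop :=
  IsPartitionOf c p.sum ∧ IsOrthogonal c ∧ domLE c p ∧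
    ∀ c', IsPartitionOf c' p.sum → IsOrthogonal c' → domLE c' p → domLE c' c

/-- `e` is the `Sp`-expansion of `p`: the minimal special symplectic partition `≥ p`. -/
def IsSpExpansion (p e : Multiset ℕ) : Prop :=
  IsPartitionOf e p.sum ∧ IsSymplectic e ∧ IsSymplectic (transpose e) ∧ domLE p e ∧
    ∀ e', IsPartitionOf e' p.sum → IsSymplectic e' → IsSymplectic (transpose e') →
      domLE p e' → domLE e e'

/-- `e` is the `SO_{2n+1}`-expansion of `p`: the minimal special orthogonal partition `≥ p`
(odd case: special means the transpose is orthogonal). -/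
def IsSOOddExpansion (p e : Multiset ℕ) : Prop :=
  IsPartitionOf e p.sum ∧ IsOrthogonal e ∧ IsOrthogonal (transpose e) ∧ domLE p e ∧
    ∀ e', IsPartitionOf e' p.sum → IsOrthogonal e' → IsOrthogonal (transpose e') →
      domLE p e' → domLE e e'

/-- `e` is the `SO_{2n}`-expansion of `p`: the minimal special orthogonal partition `≥ p`
(even case: special means the transpose is symplectic). -/
def IsSOEvenExpansion (p e : Multiset ℕ) : Prop :=
  IsPartitionOf e p.sum ∧ IsOrthogonal e ∧ IsSymplectic (transpose e) ∧ domLE p e ∧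
    ∀ e', IsPartitionOf e' p.sum → IsOrthogonal e' → IsSymplectic (transpose e') →
      domLE p e' → domLE e e'

/-- `dim_C(q)` for a symplectic partition `q` of `2k`:
`2k² + k − (1/2)Σ s_i(q)² − (1/2)Σ_{i odd} r_i(q)` (note `2k² + k = (|q|² + |q|)/2`). -/
def dimC (p : Multiset ℕ) : ℚ :=
  ((p.sum : ℚ) ^ 2 + (p.sum : ℚ)) / 2
    - (∑ i ∈ Finset.Icc 1 p.sum, (sCount p i : ℚ) ^ 2) / 2
    - (∑ i ∈ Finset.Icc 1 p.sum, if i % 2 = 1 then (rCount p i : ℚ) else 0) / 2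

/-- `dim_B(q)` for an orthogonal partition `q` of `2k+1`:
`2k² + k − (1/2)Σ s_i(q)² + (1/2)Σ_{i odd} r_i(q)` (note `2k² + k = (|q|² − |q|)/2`). -/
def dimB (p : Multiset ℕ) : ℚ :=
  ((p.sum : ℚ) ^ 2 - (p.sum : ℚ)) / 2
    - (∑ i ∈ Finset.Icc 1 p.sum, (sCount p i : ℚ) ^ 2) / 2
    + (∑ i ∈ Finset.Icc 1 p.sum, if i % 2 = 1 then (rCount p i : ℚ) else 0) / 2

/-- `dim_D(q)` for an orthogonal partition `q` of `2k`:
`2k² − k − (1/2)Σ s_i(q)² + (1/2)Σ_{i odd} r_i(q)` (note `2k² − k = (|q|² − |q|)/2`). -/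
def dimD (p : Multiset ℕ) : ℚ :=
  ((p.sum : ℚ) ^ 2 - (p.sum : ℚ)) / 2
    - (∑ i ∈ Finset.Icc 1 p.sum, (sCount p i : ℚ) ^ 2) / 2
    + (∑ i ∈ Finset.Icc 1 p.sum, if i % 2 = 1 then (rCount p i : ℚ) else 0) / 2

/-!
Everything is read off the column sums `colSum q v = s_1(q) + ⋯ + s_v(q)`. For partitions of the
same size, `a ≤ b` in dominance iff `colSum b ≤ colSum a` pointwise, because
`topSum q m = min_v (m v + |q| - colSum q v)`; `q` is orthogonal iff `colSum q v` is even at every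
odd `v`, and `q^t` is symplectic iff `topSum q (2j)` is even for every `j`.

Write `p = [2h_1 + 1, …, 2h_k + 1]`. Then `topSum p v = min v k + 2 topSum [h_i] v`, and since the
columns of `p₁` are the `h_i`, `colSum P v = topSum p v + [0 < v < k]`. Let `Q` be the partition
with `colSum Q v = topSum p v + bump p v`. Every orthogonal `c ≤ p^t` has `colSum c ≥ topSum p`,
hence `colSum c v ≥ topSum p v + 1` at each odd `v < k` (parity) and at each even `v` with
`p_v = p_{v+1}` (concavity of `colSum c`); so `c ≤ Q`. Conversely `topSum Q m ≤ topSum P m + 1`,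
with equality only if the duality for `P` at `m` is attained at an even `v < k` with
`p_v > p_{v+1}`. Then `topSum P m` is odd and `topSum P` has the even slope `v` around `m`, so
`topSum e m > topSum P m` for every `e ≥ P` with `e^t` symplectic, since `topSum e` is concave and
even at even arguments. Hence `Q` is both `P^{SO}` and `(p^t)_{SO}`.
-/

theorem card_filter_le_of_le (v a : ℕ) :
    ((Finset.Icc 1 v).filter fun i => i ≤ a).card = min a v := by
  rw [show (Finset.Icc 1 v).filter (fun i => i ≤ a) = Finset.Icc 1 (min a v) by
    ext i; simp only [Finset.mem_filter, Finset.mem_Icc]; omega, Nat.card_Icc]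
  omega

theorem le_card_filter_iff {f : ℕ → ℕ} (hf : AntitoneOn f (Set.Ici 1)) {N m i : ℕ}
    (hi : 1 ≤ i) (hiN : i ≤ N) :
    i ≤ ((Finset.Icc 1 N).filter fun j => m ≤ f j).card ↔ m ≤ f i := by
  constructor
  · intro h
    by_contra hlt
    have hsub : (Finset.Icc 1 N).filter (fun j => m ≤ f j) ⊆ Finset.Icc 1 (i - 1) := by
      intro j hj
      simp only [Finset.mem_filter, Finset.mem_Icc] at hj ⊢
      refine ⟨hj.1.1, ?_⟩
      by_contra hji
      exact hlt (hj.2.trans (hf (Set.mem_Ici.2 hi) (Set.mem_Ici.2 hj.1.1) (by omega)))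
    have := Finset.card_le_card hsub
    rw [Nat.card_Icc] at this
    omega
  · intro h
    have hsub : Finset.Icc 1 i ⊆ (Finset.Icc 1 N).filter (fun j => m ≤ f j) := by
      intro j hj
      simp only [Finset.mem_filter, Finset.mem_Icc] at hj ⊢
      exact ⟨⟨hj.1, hj.2.trans hiN⟩,
        h.trans (hf (Set.mem_Ici.2 hj.1) (Set.mem_Ici.2 hi) hj.2)⟩
    simpa using Finset.card_le_card hsub

theorem sum_range_succ_eq_sum_Icc {M : Type*} [AddCommMonoid M] (f : ℕ → M) (n : ℕ) :
    ∑ j ∈ Finset.range n, f (j + 1) = ∑ i ∈ Finset.Icc 1 n, f i := by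
  induction n with
  | zero => simp
  | succ n ih => rw [Finset.sum_range_succ, ih, Finset.sum_Icc_succ_top (by omega)]

theorem sum_Icc_ite_le {M : Type*} [AddCommMonoid M] (f : ℕ → M) {K v : ℕ} (hv : v ≤ K) :
    ∑ i ∈ Finset.Icc 1 K, (if i ≤ v then f i else 0) = ∑ i ∈ Finset.Icc 1 v, f i := by
  rw [← Finset.sum_filter]
  congr 1
  ext i
  simp only [Finset.mem_filter, Finset.mem_Icc]
  omega

theorem sum_Icc_two_mul_add_one {M : Type*} [AddCommMonoid M] (f : ℕ → M) (K : ℕ) :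
    ∑ i ∈ Finset.Icc 1 (2 * K + 1), f i
      = f 1 + ∑ j ∈ Finset.Icc 1 K, (f (2 * j) + f (2 * j + 1)) := by
  induction K with
  | zero => simp
  | succ K ih =>
    rw [show 2 * (K + 1) + 1 = 2 * K + 1 + 1 + 1 by ring, Finset.sum_Icc_succ_top (by omega),
      Finset.sum_Icc_succ_top (by omega), ih, Finset.sum_Icc_succ_top (by omega),
      show 2 * (K + 1) = 2 * K + 1 + 1 by ring, add_assoc, add_assoc]

def colSum (q : Multiset ℕ) (v : ℕ) : ℕ := ∑ i ∈ Finset.Icc 1 v, sCount q i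

/-- The `m`-th largest part of `q` (zero when `q` has fewer than `m` parts). -/
def nthPart (q : Multiset ℕ) (m : ℕ) : ℕ :=
  ((Finset.Icc 1 q.sum).filter fun i => m ≤ sCount q i).card

section PartitionCalculus

variable {q : Multiset ℕ}

theorem sCount_antitone (q : Multiset ℕ) : Antitone (sCount q) := fun _ _ h =>
  Multiset.card_le_card (Multiset.monotone_filter_right _ fun _ ha => h.trans ha)

theorem sCount_le_card (q : Multiset ℕ) (i : ℕ) : sCount q i ≤ Multiset.card q :=
  Multiset.card_le_card (Multiset.filter_le _ q)

theorem sCount_eq_zero_of_sum_lt {i : ℕ} (h : q.sum < i) : sCount q i = 0 := by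
  rw [sCount, Multiset.card_eq_zero, Multiset.filter_eq_nil]
  exact fun a ha hia => absurd (hia.trans (Multiset.le_sum_of_mem ha)) (by omega)

theorem sCount_one (hpos : ∀ a ∈ q, 0 < a) : sCount q 1 = Multiset.card q := by
  have hall : q.filter (fun a => 1 ≤ a) = q := Multiset.filter_eq_self.mpr hpos
  rw [sCount, hall]

theorem sCount_cons (b : ℕ) (q : Multiset ℕ) (i : ℕ) :
    sCount (b ::ₘ q) i = (if i ≤ b then 1 else 0) + sCount q i := by
  rw [sCount, sCount, Multiset.filter_cons]
  split <;> simp [Nat.add_comm]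

theorem count_add_sCount_succ (q : Multiset ℕ) (j : ℕ) :
    q.count j + sCount q (j + 1) = sCount q j := by
  induction q using Multiset.induction with
  | empty => simp [sCount]
  | cons b t ih =>
    rw [sCount_cons, sCount_cons, Multiset.count_cons]
    split_ifs <;> omega

theorem colSum_eq_sum_map_min (q : Multiset ℕ) (v : ℕ) :
    colSum q v = (q.map fun a => min a v).sum := by
  induction q using Multiset.induction with
  | empty => simp [colSum, sCount]
  | cons b q ih =>
    simp only [colSum, sCount_cons, Finset.sum_add_distrib, Multiset.map_cons,
      Multiset.sum_cons, ← Finset.card_filter, card_filter_le_of_le]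
    rw [colSum] at ih
    omega

theorem colSum_of_sum_le {v : ℕ} (h : q.sum ≤ v) : colSum q v = q.sum := by
  rw [colSum_eq_sum_map_min]
  conv_rhs => rw [← Multiset.map_id q]
  exact congrArg Multiset.sum <| Multiset.map_congr rfl fun a ha =>
    min_eq_left ((Multiset.le_sum_of_mem ha).trans h)

theorem colSum_succ (q : Multiset ℕ) (v : ℕ) :
    colSum q (v + 1) = colSum q v + sCount q (v + 1) :=
  Finset.sum_Icc_succ_top (by omega) _

theorem topSum_zero (q : Multiset ℕ) : topSum q 0 = 0 := by simp [topSum]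

theorem topSum_succ (q : Multiset ℕ) (m : ℕ) :
    topSum q (m + 1) = topSum q m + nthPart q (m + 1) := by
  rw [topSum, topSum, nthPart, Finset.card_filter, ← Finset.sum_add_distrib]
  exact Finset.sum_congr rfl fun i _ => by split <;> omega

theorem topSum_eq_sum_Icc {K : ℕ} (hK : q.sum ≤ K) (m : ℕ) :
    topSum q m = ∑ i ∈ Finset.Icc 1 K, min m (sCount q i) := by
  refine Finset.sum_subset (Finset.Icc_subset_Icc_right hK) fun i hi hi' => ?_
  rw [sCount_eq_zero_of_sum_lt (by simp only [Finset.mem_Icc] at hi hi'; omega), min_zero]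

theorem sum_Icc_sCount {K : ℕ} (hK : q.sum ≤ K) : ∑ i ∈ Finset.Icc 1 K, sCount q i = q.sum :=
  colSum_of_sum_le hK

theorem topSum_of_card_le {m : ℕ} (h : Multiset.card q ≤ m) : topSum q m = q.sum := by
  refine (Finset.sum_congr rfl fun i _ => ?_).trans (sum_Icc_sCount le_rfl)
  exact min_eq_right ((sCount_le_card q i).trans h)

theorem nthPart_antitone (q : Multiset ℕ) : Antitone (nthPart q) := fun _ _ h =>
  Finset.card_le_card <| Finset.monotone_filter_right _ fun _ _ hi => h.trans hi

theorem topSum_add_topSum_le (q : Multiset ℕ) (m : ℕ) :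
    topSum q m + topSum q (m + 2) ≤ 2 * topSum q (m + 1) := by
  have := nthPart_antitone q (show m + 1 ≤ m + 1 + 1 by omega)
  rw [show m + 2 = m + 1 + 1 by rfl, topSum_succ q (m + 1), topSum_succ q m]
  omega

theorem nthPart_le_sum (q : Multiset ℕ) (m : ℕ) : nthPart q m ≤ q.sum :=
  (Finset.card_filter_le _ _).trans (by simp)

theorem le_sCount_iff_le_nthPart {m i : ℕ} (hm : 1 ≤ m) (hi : 1 ≤ i) :
    m ≤ sCount q i ↔ i ≤ nthPart q m := by
  rcases le_or_gt i q.sum with hiN | hiN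
  · exact (le_card_filter_iff ((sCount_antitone q).antitoneOn _) hi hiN).symm
  · rw [sCount_eq_zero_of_sum_lt hiN]
    have := nthPart_le_sum q m
    omega

theorem colSum_add_colSum_le (q : Multiset ℕ) (v : ℕ) :
    colSum q v + colSum q (v + 2) ≤ 2 * colSum q (v + 1) := by
  have := sCount_antitone q (Nat.le_add_right (v + 1) 1)
  rw [show v + 2 = v + 1 + 1 by rfl, colSum_succ q (v + 1), colSum_succ q v]
  omega

theorem nthPart_eq_zero_of_card_lt {m : ℕ} (h : Multiset.card q < m) :
    nthPart q m = 0 := by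
  by_contra hne
  have := (le_sCount_iff_le_nthPart (q := q) (by omega) le_rfl).2 (Nat.pos_of_ne_zero hne)
  have := sCount_le_card q 1
  omega

end PartitionCalculus

section Duality

variable {q : Multiset ℕ}

theorem topSum_add_colSum_eq_sum (q : Multiset ℕ) (m v : ℕ) :
    topSum q m + colSum q v = ∑ i ∈ Finset.Icc 1 (q.sum + v),
      (min m (sCount q i) + if i ≤ v then sCount q i else 0) := by
  rw [Finset.sum_add_distrib, sum_Icc_ite_le _ (by omega), ← topSum_eq_sum_Icc (by omega), colSum]

theorem mul_add_sum_eq_sum (q : Multiset ℕ) (m v : ℕ) :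
    m * v + q.sum = ∑ i ∈ Finset.Icc 1 (q.sum + v),
      ((if i ≤ v then m else 0) + sCount q i) := by
  rw [Finset.sum_add_distrib, sum_Icc_ite_le _ (by omega), sum_Icc_sCount (by omega)]
  simp [mul_comm]

theorem topSum_add_colSum_le (q : Multiset ℕ) (m v : ℕ) :
    topSum q m + colSum q v ≤ m * v + q.sum := by
  rw [topSum_add_colSum_eq_sum, mul_add_sum_eq_sum]
  exact Finset.sum_le_sum fun i _ => by split_ifs <;> omega

theorem topSum_add_colSum_eq {m v : ℕ} (h₁ : v ≠ 0 → m ≤ sCount q v)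
    (h₂ : sCount q (v + 1) ≤ m) : topSum q m + colSum q v = m * v + q.sum := by
  rw [topSum_add_colSum_eq_sum, mul_add_sum_eq_sum]
  refine Finset.sum_congr rfl fun i hi => ?_
  rw [Finset.mem_Icc] at hi
  split_ifs with hiv
  · have := (h₁ (by omega)).trans (sCount_antitone q hiv)
    omega
  · have := sCount_antitone q (show v + 1 ≤ i by omega)
    omega

theorem topSum_add_colSum_nthPart (q : Multiset ℕ) (m : ℕ) :
    topSum q m + colSum q (nthPart q m) = m * nthPart q m + q.sum := by
  rcases Nat.eq_zero_or_pos m with rfl | hm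
  · simp [nthPart, topSum_zero, colSum_of_sum_le]
  refine topSum_add_colSum_eq (fun h => (le_sCount_iff_le_nthPart hm (by omega)).2 le_rfl) ?_
  by_contra! h
  have := (le_sCount_iff_le_nthPart hm (by omega)).1 h.le
  omega

theorem exists_topSum_add_colSum_eq (q : Multiset ℕ) (v : ℕ) :
    ∃ m, topSum q m + colSum q v = m * v + q.sum :=
  ⟨sCount q (v + 1), topSum_add_colSum_eq (fun _ => sCount_antitone q (by omega)) le_rfl⟩

theorem domLE_iff_colSum_le {a b : Multiset ℕ} (hsum : a.sum = b.sum) :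
    domLE a b ↔ ∀ v, colSum b v ≤ colSum a v := by
  constructor
  · intro hab v
    obtain ⟨m, hm⟩ := exists_topSum_add_colSum_eq a v
    have := topSum_add_colSum_le b m v
    have := hab m
    omega
  · intro h m
    have := topSum_add_colSum_nthPart b m
    have := topSum_add_colSum_le a m (nthPart b m)
    have := h (nthPart b m)
    omega

theorem domLE_antisymm {N : ℕ} {a b : Multiset ℕ} (ha : IsPartitionOf a N)
    (hb : IsPartitionOf b N) (hab : domLE a b) (hba : domLE b a) : a = b := by
  have hsum : a.sum = b.sum := ha.2.trans hb.2.symm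
  have hcol : ∀ v, colSum a v = colSum b v := fun v =>
    le_antisymm ((domLE_iff_colSum_le hsum.symm).1 hba v) ((domLE_iff_colSum_le hsum).1 hab v)
  have hs : ∀ i, sCount a (i + 1) = sCount b (i + 1) := fun i => by
    have := colSum_succ a i
    have := colSum_succ b i
    have := hcol i
    have := hcol (i + 1)
    omega
  ext j
  rcases Nat.eq_zero_or_pos j with rfl | hj
  · rw [Multiset.count_eq_zero_of_notMem fun h => (ha.1 0 h).false,
      Multiset.count_eq_zero_of_notMem fun h => (hb.1 0 h).false]
  · have := count_add_sCount_succ a j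
    have := count_add_sCount_succ b j
    obtain ⟨i, rfl⟩ : ∃ i, j = i + 1 := ⟨j - 1, by omega⟩
    have := hs i
    have := hs (i + 1)
    omega

end Duality

section Transpose

variable {q : Multiset ℕ}

theorem sCount_eq_zero_of_maxPart_lt {i : ℕ} (h : maxPart q < i) : sCount q i = 0 := by
  rw [sCount, Multiset.card_eq_zero, Multiset.filter_eq_nil]
  exact fun a ha hia => absurd (Multiset.le_sup ha) (by rw [maxPart] at h; omega)

theorem topSum_eq_sum_Icc_maxPart (q : Multiset ℕ) (m : ℕ) :
    topSum q m = ∑ i ∈ Finset.Icc 1 (maxPart q), min m (sCount q i) := by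
  have hM : maxPart q ≤ q.sum := Multiset.sup_le.2 fun _ h => Multiset.le_sum_of_mem h
  refine (Finset.sum_subset (Finset.Icc_subset_Icc_right hM) fun i hi hi' => ?_).symm
  rw [sCount_eq_zero_of_maxPart_lt (by simp only [Finset.mem_Icc] at hi hi'; omega), min_zero]

theorem colSum_transpose (q : Multiset ℕ) (v : ℕ) : colSum (transpose q) v = topSum q v := by
  rw [colSum_eq_sum_map_min, transpose, Multiset.map_map, topSum_eq_sum_Icc_maxPart,
    ← sum_range_succ_eq_sum_Icc]
  exact congrArg Multiset.sum (Multiset.map_congr rfl fun j _ => min_comm (sCount q (j + 1)) v)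

theorem sum_transpose (q : Multiset ℕ) : (transpose q).sum = q.sum := by
  have h := colSum_transpose q ((transpose q).sum + Multiset.card q)
  rwa [colSum_of_sum_le (by omega), topSum_of_card_le (by omega)] at h

theorem sCount_transpose (q : Multiset ℕ) {i : ℕ} (hi : 1 ≤ i) :
    sCount (transpose q) i = nthPart q i := by
  obtain ⟨j, rfl⟩ : ∃ j, i = j + 1 := ⟨i - 1, by omega⟩
  have := colSum_succ (transpose q) j
  rw [colSum_transpose, colSum_transpose, topSum_succ] at this
  omega

theorem pos_of_mem_transpose {a : ℕ} (ha : a ∈ transpose q) : 0 < a := by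
  obtain ⟨j, hj, rfl⟩ := Multiset.mem_map.1 ha
  rw [Multiset.mem_range] at hj
  rw [sCount, Multiset.card_pos]
  intro hnil
  rw [Multiset.filter_eq_nil] at hnil
  have : maxPart q ≤ j := Multiset.sup_le.2 fun b hb => by have := hnil b hb; omega
  omega

def ofParts (g : ℕ → ℕ) (K : ℕ) : Multiset ℕ := (Multiset.range K).map fun j => g (j + 1)

theorem sCount_ofParts (g : ℕ → ℕ) (K m : ℕ) :
    sCount (ofParts g K) m = ((Finset.Icc 1 K).filter fun v => m ≤ g v).card := by
  rw [sCount, ofParts, Multiset.filter_map, Multiset.card_map, Finset.card_filter,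
    ← sum_range_succ_eq_sum_Icc (fun v => if m ≤ g v then 1 else 0), ← Finset.card_filter]
  rfl

theorem sCount_transpose_ofParts {g : ℕ → ℕ} (hg : AntitoneOn g (Set.Ici 1)) (K : ℕ) {i : ℕ}
    (hi : 1 ≤ i) : sCount (transpose (ofParts g K)) i = if i ≤ K then g i else 0 := by
  rw [sCount_transpose _ hi, nthPart]
  split_ifs with hiK
  · have hgi : g i ≤ (ofParts g K).sum :=
      Multiset.le_sum_of_mem (Multiset.mem_map.2 ⟨i - 1, Multiset.mem_range.2 (by omega),
        by rw [Nat.sub_add_cancel hi]⟩)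
    rw [Finset.filter_congr fun m _ => by rw [sCount_ofParts, le_card_filter_iff hg hi hiK],
      card_filter_le_of_le, min_eq_left hgi]
  · refine Finset.card_eq_zero.2 (Finset.filter_eq_empty_iff.2 fun m _ h => ?_)
    have hcard : Multiset.card (ofParts g K) = K := by simp [ofParts]
    have := sCount_le_card (ofParts g K) m
    omega

end Transpose

section Parity

variable {q : Multiset ℕ}

theorem even_colSum_of_isOrthogonal (horth : IsOrthogonal q) (hsum : Even q.sum) {v : ℕ}
    (hv : v % 2 = 1) : Even (colSum q v) := by
  suffices h : ∀ j, colSum q v % 2 = colSum q (v + 2 * j) % 2 by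
    have := h q.sum
    rw [colSum_of_sum_le (v := v + 2 * q.sum) (by omega)] at this
    rw [Nat.even_iff] at hsum ⊢
    omega
  intro j
  induction j with
  | zero => rfl
  | succ j ih =>
    have := colSum_succ q (v + 2 * j + 1)
    have := colSum_succ q (v + 2 * j)
    have := count_add_sCount_succ q (v + 2 * j + 1)
    have := Nat.even_iff.1 (horth (v + 2 * j + 1) (by omega))
    rw [show v + 2 * (j + 1) = v + 2 * j + 1 + 1 by ring]
    omega

theorem isOrthogonal_of_even_colSum (hpos : ∀ a ∈ q, 0 < a)
    (h : ∀ v, v % 2 = 1 → Even (colSum q v)) : IsOrthogonal q := by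
  intro a ha
  rcases Nat.eq_zero_or_pos a with rfl | ha0
  · rw [Multiset.count_eq_zero_of_notMem fun h => (hpos 0 h).false]
    exact ⟨0, rfl⟩
  obtain ⟨b, rfl⟩ : ∃ b, a = b + 1 := ⟨a - 1, by omega⟩
  have := count_add_sCount_succ q (b + 1)
  have := colSum_succ q (b + 1)
  have := colSum_succ q b
  have := Nat.even_iff.1 (h (b + 1 + 1) (by omega))
  have := Nat.even_iff.1 (h b (by omega))
  rw [Nat.even_iff]
  omega

theorem topSum_add_count_transpose (q : Multiset ℕ) (k : ℕ) :
    topSum q (2 * k + 2) + (transpose q).count (2 * k + 1)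
      = topSum q (2 * k) + 2 * nthPart q (2 * k + 1) := by
  have := count_add_sCount_succ (transpose q) (2 * k + 1)
  rw [sCount_transpose q (by omega), sCount_transpose q (by omega)] at this
  rw [topSum_succ, topSum_succ]
  omega

theorem isSymplectic_transpose_iff :
    IsSymplectic (transpose q) ↔ ∀ k, Even (topSum q (2 * k)) := by
  simp only [Nat.even_iff]
  constructor
  · intro h k
    induction k with
    | zero => simp [topSum_zero]
    | succ k ih =>
      have := topSum_add_count_transpose q k
      have := Nat.even_iff.1 (h (2 * k + 1) (by omega))
      rw [show 2 * (k + 1) = 2 * k + 2 by ring]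
      omega
  · intro h a ha
    obtain ⟨k, rfl⟩ : ∃ k, a = 2 * k + 1 := ⟨a / 2, by omega⟩
    have := topSum_add_count_transpose q k
    have := h k
    have := h (k + 1)
    rw [show 2 * (k + 1) = 2 * k + 2 by ring] at this
    rw [Nat.even_iff]
    omega

theorem topSum_lt_of_odd {a e : Multiset ℕ} (he : IsSymplectic (transpose e))
    (hae : domLE a e) {m : ℕ} (hm : topSum a m % 2 = 1)
    (hslope : m % 2 = 1 → nthPart a m = nthPart a (m + 1) ∧ nthPart a m % 2 = 0) :
    topSum a m < topSum e m := by
  have he' : ∀ j, j % 2 = 0 → topSum e j % 2 = 0 := fun j hj => by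
    have := Nat.even_iff.1 (isSymplectic_transpose_iff.1 he (j / 2))
    rwa [Nat.mul_div_cancel' (Nat.dvd_of_mod_eq_zero hj)] at this
  by_cases hm2 : m % 2 = 0
  · have := hae m
    have := he' m hm2
    omega
  obtain ⟨hflat, hslope⟩ := hslope (by omega)
  rcases m with _ | u
  · simp at hm2
  rw [show u + 1 + 1 = u + 2 from rfl] at hflat
  have := topSum_succ a u
  have := topSum_succ a (u + 1)
  rw [show u + 1 + 1 = u + 2 from rfl] at this
  have := topSum_add_topSum_le e u
  have := hae u
  have := hae (u + 2)
  have := he' u (by omega)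
  have := he' (u + 2) (by omega)
  omega

end Parity

section OddParts

variable {p : Multiset ℕ}

def halfParts (p : Multiset ℕ) : Multiset ℕ := (p.map fun b => b / 2).filter fun x => 0 < x

theorem pOne_eq_transpose_halfParts (p : Multiset ℕ) : pOne p = transpose (halfParts p) := rfl

theorem card_add_two_mul_sum_halfParts (hodd : ∀ a ∈ p, a % 2 = 1) :
    Multiset.card p + 2 * (halfParts p).sum = p.sum := by
  induction p using Multiset.induction with
  | empty => simp [halfParts]
  | cons b t ih =>
    have hb := hodd b (Multiset.mem_cons_self b t)
    have ht := ih fun a ha => hodd a (Multiset.mem_cons_of_mem ha)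
    simp only [halfParts, Multiset.map_cons, Multiset.filter_cons, Multiset.card_cons,
      Multiset.sum_cons] at ht ⊢
    split_ifs <;>
      simp only [Multiset.sum_add, Multiset.sum_singleton, zero_add] <;> omega

theorem even_card_iff_even_sum (hodd : ∀ a ∈ p, a % 2 = 1) :
    Even (Multiset.card p) ↔ Even p.sum := by
  rw [← card_add_two_mul_sum_halfParts hodd, Nat.even_add, Nat.even_iff, Nat.even_iff]
  omega

theorem two_mul_nStar (hodd : ∀ a ∈ p, a % 2 = 1) (hk : Even (Multiset.card p)) :
    2 * nStar p = Multiset.card p := by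
  rw [nStar, oddMult, Multiset.filter_eq_self.2 hodd]
  exact Nat.two_mul_div_two_of_even hk

theorem sCount_halfParts (hodd : ∀ a ∈ p, a % 2 = 1) {j : ℕ} (hj : 0 < j) :
    sCount (halfParts p) j = sCount p (2 * j + 1) := by
  rw [sCount, halfParts, Multiset.filter_filter,
    Multiset.filter_congr fun a _ => ⟨And.left, fun h => ⟨h, hj.trans_le h⟩⟩,
    Multiset.filter_map, Multiset.card_map, sCount]
  congr 1
  exact Multiset.filter_congr fun a ha => by have := hodd a ha; simp only [Function.comp]; omega

theorem sCount_two_mul (hodd : ∀ a ∈ p, a % 2 = 1) (j : ℕ) :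
    sCount p (2 * j) = sCount p (2 * j + 1) := by
  rw [sCount, sCount]
  congr 1
  exact Multiset.filter_congr fun a ha => by have := hodd a ha; omega

/-- The `v` largest parts `2h + 1` of `p` contribute `min v k` units and twice the `v` largest
halves. -/
theorem topSum_eq_min_card_add (hodd : ∀ a ∈ p, a % 2 = 1) (v : ℕ) :
    topSum p v = min v (Multiset.card p) + 2 * topSum (halfParts p) v := by
  have hsum := card_add_two_mul_sum_halfParts hodd
  rw [topSum_eq_sum_Icc (K := 2 * p.sum + 1) (by omega), sum_Icc_two_mul_add_one,
    topSum_eq_sum_Icc (K := p.sum) (by omega), Finset.mul_sum,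
    sCount_one fun a ha => by have := hodd a ha; omega]
  congr 1
  refine Finset.sum_congr rfl fun j hj => ?_
  rw [sCount_two_mul hodd, sCount_halfParts hodd (Finset.mem_Icc.1 hj).1]
  ring

theorem odd_nthPart (hodd : ∀ a ∈ p, a % 2 = 1) {v : ℕ} (hv : 0 < v)
    (hvk : v ≤ Multiset.card p) : nthPart p v % 2 = 1 := by
  obtain ⟨u, rfl⟩ : ∃ u, v = u + 1 := ⟨v - 1, by omega⟩
  have := topSum_succ p u
  rw [topSum_eq_min_card_add hodd, topSum_eq_min_card_add hodd] at this
  omega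

def pDouble (p : Multiset ℕ) : Multiset ℕ :=
  addPart (2 * nStar p - 1) ((1 : ℕ) ::ₘ (pOne p + pOne p))

theorem pDouble_eq (hodd : ∀ a ∈ p, a % 2 = 1) (hk : Even (Multiset.card p)) (hne : p ≠ 0) :
    pDouble p = (Multiset.card p - 1) ::ₘ (1 : ℕ) ::ₘ (pOne p + pOne p) := by
  have := two_mul_nStar hodd hk
  have := Multiset.card_pos.2 hne
  rw [pDouble, addPart, if_neg (by omega)]
  congr 1
  omega

theorem colSum_pDouble (hodd : ∀ a ∈ p, a % 2 = 1) (hk : Even (Multiset.card p)) (hne : p ≠ 0)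
    (v : ℕ) : colSum (pDouble p) v = topSum p v + if 0 < v ∧ v < Multiset.card p then 1 else 0 := by
  have := Multiset.card_pos.2 hne
  rw [colSum_eq_sum_map_min, pDouble_eq hodd hk hne, Multiset.map_cons, Multiset.map_cons,
    Multiset.map_add, Multiset.sum_cons, Multiset.sum_cons, Multiset.sum_add,
    ← colSum_eq_sum_map_min, pOne_eq_transpose_halfParts, colSum_transpose,
    topSum_eq_min_card_add hodd v]
  split_ifs <;> omega

theorem sum_pDouble (hodd : ∀ a ∈ p, a % 2 = 1) (hk : Even (Multiset.card p)) (hne : p ≠ 0) :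
    (pDouble p).sum = p.sum := by
  have h := colSum_pDouble hodd hk hne ((pDouble p).sum + p.sum + Multiset.card p)
  rwa [colSum_of_sum_le (by omega), topSum_of_card_le (by omega), if_neg (by omega),
    add_zero] at h

end OddParts

section Collapse

variable {p : Multiset ℕ}

/-- The excess of the column sums of `(p^t)_{SO}` over those of `p^t`: the columns must be
raised by one at each odd `v < k` to make them even, and then at each even `v` with
`p_v = p_{v+1}` to keep the column lengths weakly decreasing. -/
def bump (p : Multiset ℕ) (v : ℕ) : ℕ :=
  if 0 < v ∧ v < Multiset.card p ∧ (v % 2 = 1 ∨ nthPart p v = nthPart p (v + 1)) then 1 else 0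

def collapsePart (p : Multiset ℕ) (v : ℕ) : ℕ := nthPart p v + bump p v - bump p (v - 1)

def collapseOfTranspose (p : Multiset ℕ) : Multiset ℕ :=
  transpose (ofParts (collapsePart p) (Multiset.card p))

theorem bump_le_one (p : Multiset ℕ) (v : ℕ) : bump p v ≤ 1 := by
  unfold bump
  split_ifs <;> omega

theorem bump_of_card_le {v : ℕ} (h : Multiset.card p ≤ v) : bump p v = 0 := by
  rw [bump, if_neg (by omega)]

theorem collapsePart_succ_le (hodd : ∀ a ∈ p, a % 2 = 1) (hk : Even (Multiset.card p)) {v : ℕ}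
    (hv : 0 < v) : collapsePart p (v + 1) ≤ collapsePart p v := by
  obtain ⟨u, rfl⟩ : ∃ u, v = u + 1 := ⟨v - 1, by omega⟩
  have := Nat.even_iff.1 hk
  have := nthPart_antitone p (Nat.le_add_right (u + 1) 1)
  have := nthPart_antitone p (Nat.le_add_right (u + 1 + 1) 1)
  have : u + 1 ≤ Multiset.card p → nthPart p (u + 1) % 2 = 1 := odd_nthPart hodd (by omega)
  have : u + 1 + 1 ≤ Multiset.card p → nthPart p (u + 1 + 1) % 2 = 1 :=
    odd_nthPart hodd (by omega)
  have : Multiset.card p < u + 1 + 1 → nthPart p (u + 1 + 1) = 0 := nthPart_eq_zero_of_card_lt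
  simp only [collapsePart, bump, Nat.add_sub_cancel]
  split_ifs <;> omega

theorem collapsePart_antitoneOn (hodd : ∀ a ∈ p, a % 2 = 1) (hk : Even (Multiset.card p)) :
    AntitoneOn (collapsePart p) (Set.Ici 1) := by
  intro v hv w _ hvw
  rw [Set.mem_Ici] at hv
  induction w, hvw using Nat.le_induction with
  | base => exact le_rfl
  | succ w hw ih =>
    exact (collapsePart_succ_le hodd hk (by omega)).trans (ih (Set.mem_Ici.2 (by omega)))

theorem colSum_collapseOfTranspose (hodd : ∀ a ∈ p, a % 2 = 1) (hk : Even (Multiset.card p))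
    (v : ℕ) : colSum (collapseOfTranspose p) v = topSum p v + bump p v := by
  induction v with
  | zero => simp [colSum, topSum_zero, bump]
  | succ v ih =>
    rw [colSum_succ, ih, collapseOfTranspose,
      sCount_transpose_ofParts (collapsePart_antitoneOn hodd hk) _ (by omega : 0 < v + 1),
      topSum_succ]
    have := bump_le_one p v
    have hv1_odd : v + 1 ≤ Multiset.card p → nthPart p (v + 1) % 2 = 1 :=
      odd_nthPart hodd (by omega)
    have hv_zero : Multiset.card p < v + 1 → bump p v = 0 ∧ bump p (v + 1) = 0 := fun h =>
      ⟨bump_of_card_le (by omega), bump_of_card_le (by omega)⟩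
    have hv1_zero : Multiset.card p < v + 1 → nthPart p (v + 1) = 0 := nthPart_eq_zero_of_card_lt
    simp only [collapsePart, Nat.add_sub_cancel]
    split_ifs <;> omega

theorem sCount_collapseOfTranspose (hodd : ∀ a ∈ p, a % 2 = 1) (hk : Even (Multiset.card p))
    {v : ℕ} (hv : 0 < v) : sCount (collapseOfTranspose p) v =
      if v ≤ Multiset.card p then collapsePart p v else 0 :=
  sCount_transpose_ofParts (collapsePart_antitoneOn hodd hk) _ hv

theorem sum_collapseOfTranspose (hodd : ∀ a ∈ p, a % 2 = 1) (hk : Even (Multiset.card p)) :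
    (collapseOfTranspose p).sum = p.sum := by
  have h := colSum_collapseOfTranspose hodd hk
    ((collapseOfTranspose p).sum + p.sum + Multiset.card p)
  rwa [colSum_of_sum_le (by omega), topSum_of_card_le (by omega), bump_of_card_le (by omega),
    add_zero] at h

theorem even_topSum_add_min_card (hodd : ∀ a ∈ p, a % 2 = 1) (v : ℕ) :
    Even (topSum p v + min v (Multiset.card p)) := by
  rw [topSum_eq_min_card_add hodd]
  exact ⟨min v (Multiset.card p) + topSum (halfParts p) v, by ring⟩

theorem even_colSum_collapseOfTranspose (hodd : ∀ a ∈ p, a % 2 = 1) (hk : Even (Multiset.card p))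
    {v : ℕ} (hv : v % 2 = 1 ∨ bump p v = 0) : Even (colSum (collapseOfTranspose p) v) := by
  have := Nat.even_iff.1 (even_topSum_add_min_card hodd v)
  rw [colSum_collapseOfTranspose hodd hk, Nat.even_iff]
  rw [Nat.even_iff] at hk
  rw [Nat.min_def] at this
  rcases hv with hv | hv
  · unfold bump
    split_ifs at this ⊢ <;> omega
  · rw [hv]
    unfold bump at hv
    split_ifs at hv this <;> omega

theorem isOrthogonal_collapseOfTranspose (hodd : ∀ a ∈ p, a % 2 = 1)
    (hk : Even (Multiset.card p)) : IsOrthogonal (collapseOfTranspose p) :=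
  isOrthogonal_of_even_colSum (fun _ ha => pos_of_mem_transpose ha) fun _ hv =>
    even_colSum_collapseOfTranspose hodd hk (Or.inl hv)

theorem sCount_collapseOfTranspose_succ (hodd : ∀ a ∈ p, a % 2 = 1) (hk : Even (Multiset.card p))
    {v : ℕ} (hv : v % 2 = 0) (hbump : bump p v ≠ 0) :
    sCount (collapseOfTranspose p) (v + 1) = sCount (collapseOfTranspose p) v := by
  have hkv : 0 < v ∧ v < Multiset.card p ∧ nthPart p v = nthPart p (v + 1) := by
    unfold bump at hbump
    split_ifs at hbump with h
    · omega
    · exact absurd rfl hbump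
  have := Nat.even_iff.1 hk
  have := odd_nthPart hodd hkv.1 hkv.2.1.le
  rw [sCount_collapseOfTranspose hodd hk hkv.1, sCount_collapseOfTranspose hodd hk (by omega),
    if_pos (by omega), if_pos hkv.2.1.le]
  simp only [collapsePart, bump, Nat.add_sub_cancel]
  split_ifs <;> omega

theorem isSymplectic_transpose_collapseOfTranspose (hodd : ∀ a ∈ p, a % 2 = 1)
    (hk : Even (Multiset.card p)) : IsSymplectic (transpose (collapseOfTranspose p)) := by
  refine isSymplectic_transpose_iff.2 fun m => ?_
  rcases Nat.eq_zero_or_pos m with rfl | hm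
  · simp [topSum_zero]
  obtain ⟨v, hv⟩ : ∃ v, nthPart (collapseOfTranspose p) (2 * m) = v := ⟨_, rfl⟩
  have hQ := topSum_add_colSum_nthPart (collapseOfTranspose p) (2 * m)
  have hsum : Even (collapseOfTranspose p).sum := by
    rw [sum_collapseOfTranspose hodd hk, ← even_card_iff_even_sum hodd]
    exact hk
  have hcol : Even (colSum (collapseOfTranspose p) v) := by
    refine even_colSum_collapseOfTranspose hodd hk ?_
    by_contra! h
    have hflat := sCount_collapseOfTranspose_succ hodd hk (by omega) h.2
    have hv0 : 0 < v := by unfold bump at h; split_ifs at h <;> omega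
    have := (le_sCount_iff_le_nthPart (by omega) hv0).2 hv.ge
    have := (le_sCount_iff_le_nthPart (q := collapseOfTranspose p) (m := 2 * m) (by omega)
      (by omega : 0 < v + 1)).1 (by omega)
    omega
  rw [hv] at hQ
  rw [Nat.even_iff] at hcol hsum ⊢
  have : 2 * m * v % 2 = 0 := by rw [mul_assoc]; exact Nat.mul_mod_right 2 _
  omega

theorem domLE_pDouble_collapseOfTranspose (hodd : ∀ a ∈ p, a % 2 = 1)
    (hk : Even (Multiset.card p)) (hne : p ≠ 0) : domLE (pDouble p) (collapseOfTranspose p) := by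
  refine (domLE_iff_colSum_le (by rw [sum_pDouble hodd hk hne,
    sum_collapseOfTranspose hodd hk])).2 fun v => ?_
  rw [colSum_collapseOfTranspose hodd hk, colSum_pDouble hodd hk hne]
  unfold bump
  split_ifs <;> omega

theorem domLE_collapseOfTranspose_transpose (hodd : ∀ a ∈ p, a % 2 = 1)
    (hk : Even (Multiset.card p)) : domLE (collapseOfTranspose p) (transpose p) :=
  (domLE_iff_colSum_le (by rw [sum_collapseOfTranspose hodd hk, sum_transpose])).2 fun v => by
    rw [colSum_transpose, colSum_collapseOfTranspose hodd hk]
    omega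

theorem topSum_add_bump_le_colSum (hodd : ∀ a ∈ p, a % 2 = 1) (hk : Even (Multiset.card p))
    {c : Multiset ℕ} (hc : ∀ v, topSum p v ≤ colSum c v)
    (heven : ∀ v, v % 2 = 1 → Even (colSum c v)) (v : ℕ) :
    topSum p v + bump p v ≤ colSum c v := by
  have hstrict : ∀ w, w % 2 = 1 → w < Multiset.card p → topSum p w + 1 ≤ colSum c w := by
    intro w hw hwk
    have := Nat.even_iff.1 (even_topSum_add_min_card hodd w)
    rw [min_eq_left hwk.le] at this
    have := hc w
    have := Nat.even_iff.1 (heven w hw)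
    omega
  have := hc v
  unfold bump
  split_ifs with h
  · by_cases hv : v % 2 = 1
    · have := hstrict v hv h.2.1
      omega
    obtain ⟨u, rfl⟩ : ∃ u, v = u + 1 := ⟨v - 1, by omega⟩
    have hflat : nthPart p (u + 1) = nthPart p (u + 2) := h.2.2.resolve_left hv
    have := Nat.even_iff.1 hk
    have := hstrict u (by omega) (by omega)
    have := hstrict (u + 2) (by omega) (by omega)
    have := topSum_succ p u
    have hsucc := topSum_succ p (u + 1)
    rw [show u + 1 + 1 = u + 2 from rfl] at hsucc
    have := colSum_add_colSum_le c u
    omega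
  · omega

theorem sCount_pDouble (hodd : ∀ a ∈ p, a % 2 = 1) (hk : Even (Multiset.card p)) (hne : p ≠ 0)
    {v : ℕ} (hv : 1 < v) (hvk : v < Multiset.card p) : sCount (pDouble p) v = nthPart p v := by
  obtain ⟨u, rfl⟩ : ∃ u, v = u + 1 := ⟨v - 1, by omega⟩
  have := colSum_succ (pDouble p) u
  rw [colSum_pDouble hodd hk hne, colSum_pDouble hodd hk hne, topSum_succ,
    if_pos (by omega), if_pos (by omega)] at this
  omega

theorem topSum_pDouble_mod_two (hodd : ∀ a ∈ p, a % 2 = 1) (hk : Even (Multiset.card p))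
    (hne : p ≠ 0) {m v : ℕ} (hv : nthPart (pDouble p) m = v) (hv0 : 0 < v)
    (hvk : v < Multiset.card p) (hv2 : v % 2 = 0) : topSum (pDouble p) m % 2 = 1 := by
  have hP := topSum_add_colSum_nthPart (pDouble p) m
  rw [hv, colSum_pDouble hodd hk hne, sum_pDouble hodd hk hne, if_pos ⟨hv0, hvk⟩] at hP
  have := Nat.even_iff.1 (even_topSum_add_min_card hodd v)
  rw [min_eq_left hvk.le] at this
  have := Nat.even_iff.1 ((even_card_iff_even_sum hodd).1 hk)
  have := Nat.even_iff.1 (Nat.even_mul.2 (Or.inr (Nat.even_iff.2 hv2)) : Even (m * v))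
  omega

theorem domLE_collapseOfTranspose_of_special (hodd : ∀ a ∈ p, a % 2 = 1)
    (hk : Even (Multiset.card p)) (hne : p ≠ 0) {e : Multiset ℕ}
    (he : IsSymplectic (transpose e)) (hPe : domLE (pDouble p) e) :
    domLE (collapseOfTranspose p) e := by
  intro m
  rcases Nat.eq_zero_or_pos m with rfl | hm
  · simp [topSum_zero]
  obtain ⟨v, hv⟩ : ∃ v, nthPart (pDouble p) m = v := ⟨_, rfl⟩
  have hP := topSum_add_colSum_nthPart (pDouble p) m
  have hQ := topSum_add_colSum_le (collapseOfTranspose p) m v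
  rw [hv, colSum_pDouble hodd hk hne, sum_pDouble hodd hk hne] at hP
  rw [colSum_collapseOfTranspose hodd hk, sum_collapseOfTranspose hodd hk] at hQ
  have := hPe m
  rcases (show bump p v = (if 0 < v ∧ v < Multiset.card p then 1 else 0) ∨
      0 < v ∧ v < Multiset.card p ∧ v % 2 = 0 ∧ bump p v = 0 by
    unfold bump; split_ifs <;> omega) with hgood | ⟨hv0, hvk, hv2, hbump⟩
  · omega
  rw [if_pos ⟨hv0, hvk⟩] at hP
  rw [hbump] at hQ
  have hsv : sCount (pDouble p) v = nthPart p v := sCount_pDouble hodd hk hne (by omega) hvk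
  have hmv : m ≤ nthPart p v := hsv ▸ (le_sCount_iff_le_nthPart hm hv0).2 hv.ge
  rcases hmv.eq_or_lt with hmv | hmv
  · -- bound through the odd column `v - 1`, where `bump` is one
    obtain ⟨u, rfl⟩ : ∃ u, v = u + 1 := ⟨v - 1, by omega⟩
    have hQ' := topSum_add_colSum_le (collapseOfTranspose p) m u
    rw [colSum_collapseOfTranspose hodd hk, sum_collapseOfTranspose hodd hk] at hQ'
    have : bump p u = 1 := by unfold bump; rw [if_pos (by omega)]
    have := topSum_succ p u
    rw [Nat.mul_succ] at hP hQ
    omega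
  have hslope : m % 2 = 1 → nthPart (pDouble p) m = nthPart (pDouble p) (m + 1) ∧
      nthPart (pDouble p) m % 2 = 0 := fun _ => by
    have := (le_sCount_iff_le_nthPart (q := pDouble p) (by omega : 0 < m + 1) hv0).1 (by omega)
    have := nthPart_antitone (pDouble p) (Nat.le_add_right m 1)
    omega
  have := topSum_lt_of_odd he hPe (topSum_pDouble_mod_two hodd hk hne hv hv0 hvk hv2) hslope
  omega

theorem domLE_collapseOfTranspose_of_isOrthogonal (hodd : ∀ a ∈ p, a % 2 = 1)
    (hk : Even (Multiset.card p)) {c : Multiset ℕ} (hsum : c.sum = p.sum)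
    (horth : IsOrthogonal c) (hcp : domLE c (transpose p)) : domLE c (collapseOfTranspose p) := by
  have hcol := (domLE_iff_colSum_le (hsum.trans (sum_transpose p).symm)).1 hcp
  refine (domLE_iff_colSum_le (hsum.trans (sum_collapseOfTranspose hodd hk).symm)).2 fun v => ?_
  rw [colSum_collapseOfTranspose hodd hk]
  refine topSum_add_bump_le_colSum hodd hk (fun w => colSum_transpose p w ▸ hcol w)
    (fun w hw => even_colSum_of_isOrthogonal horth ?_ hw) v
  rw [hsum, ← even_card_iff_even_sum hodd]
  exact hk

theorem isSOEvenExpansion_pDouble (hodd : ∀ a ∈ p, a % 2 = 1) (hk : Even (Multiset.card p))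
    (hne : p ≠ 0) : IsSOEvenExpansion (pDouble p) (collapseOfTranspose p) :=
  ⟨⟨fun _ ha => pos_of_mem_transpose ha, by
      rw [sum_collapseOfTranspose hodd hk, sum_pDouble hodd hk hne]⟩,
    isOrthogonal_collapseOfTranspose hodd hk, isSymplectic_transpose_collapseOfTranspose hodd hk,
    domLE_pDouble_collapseOfTranspose hodd hk hne,
    fun _ _ _ he hPe => domLE_collapseOfTranspose_of_special hodd hk hne he hPe⟩

theorem isSOCollapse_transpose (hodd : ∀ a ∈ p, a % 2 = 1) (hk : Even (Multiset.card p)) :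
    IsSOCollapse (transpose p) (collapseOfTranspose p) :=
  ⟨⟨fun _ ha => pos_of_mem_transpose ha, by
      rw [sum_collapseOfTranspose hodd hk, sum_transpose]⟩,
    isOrthogonal_collapseOfTranspose hodd hk, domLE_collapseOfTranspose_transpose hodd hk,
    fun _ hc horth hcp => domLE_collapseOfTranspose_of_isOrthogonal hodd hk
      (hc.2.trans (sum_transpose p)) horth hcp⟩

end Collapse

theorem IsSOEvenExpansion.unique {q e e' : Multiset ℕ} (he : IsSOEvenExpansion q e)
    (he' : IsSOEvenExpansion q e') : e = e' :=
  domLE_antisymm he.1 he'.1 (he.2.2.2.2 e' he'.1 he'.2.1 he'.2.2.1 he'.2.2.2.1)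
    (he'.2.2.2.2 e he.1 he.2.1 he.2.2.1 he.2.2.2.1)

theorem IsSOCollapse.unique {q c c' : Multiset ℕ} (hc : IsSOCollapse q c)
    (hc' : IsSOCollapse q c') : c = c' :=
  domLE_antisymm hc.1 hc'.1 (hc'.2.2.2 c hc.1 hc.2.1 hc.2.2.1) (hc.2.2.2 c' hc'.1 hc'.2.1 hc'.2.2.1)

theorem expansion_eq_collapse_SO_even_general (n : ℕ) (p : Multiset ℕ) (hne : p ≠ 0)
    (hp : IsPartitionOf p (2 * n)) (hodd : ∀ a ∈ p, a % 2 = 1) :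
    Even (Multiset.card p) ∧ 2 * nStar p = Multiset.card p ∧
      ∀ e c : Multiset ℕ,
        IsSOEvenExpansion (addPart (2 * nStar p - 1) ((1 : ℕ) ::ₘ (pOne p + pOne p))) e →
        IsSOCollapse (transpose p) c → e = c := by
  have hk : Even (Multiset.card p) := (even_card_iff_even_sum hodd).2 ⟨n, by rw [hp.2]; ring⟩
  refine ⟨hk, two_mul_nStar hodd hk, fun e c he hc => ?_⟩
  calc e = collapseOfTranspose p := he.unique (isSOEvenExpansion_pDouble hodd hk hne)
    _ = c := (isSOCollapse_transpose hodd hk).unique hc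

/-- `p` an orthogonal partition of `2n` all of whose parts are odd.
Then the number of parts `Σ_i a_i` is even, `2n* = Σ_i a_i`, and with
`P = [p₁ p₁ (2n*−1) 1]` one has `P^{SO_{2n}} = (p^t)_{SO_{2n}}`. -/
theorem expansion_eq_collapse_SO_even (n : ℕ) (p : Multiset ℕ) (hne : p ≠ 0)
    (hp : IsPartitionOf p (2 * n)) (horth : IsOrthogonal p)
    (hodd : ∀ a ∈ p, a % 2 = 1) :
    Even (Multiset.card p) ∧ 2 * nStar p = Multiset.card p ∧
      ∀ e c : Multiset ℕ,
        IsSOEvenExpansion (addPart (2 * nStar p - 1) ((1 : ℕ) ::ₘ (pOne p + pOne p))) e →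
        IsSOCollapse (transpose p) c → e = c :=
  expansion_eq_collapse_SO_even_general n p hne hp hodd

end JiangWF
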